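/- arXiv:1810.13261 — 3 statements merged into one kernel-verified Lean document; each statement's English description precedes it below -/
import Mathlib

section
/- For the functor F X = Finset (A × X) on types with decidable equality, and a relation R : X → Y → Prop, finite sets u : Finset (A × X) and v : Finset (A × Y), the propositionally truncated relation lifting ∃ t : Finset (A × {p : X × Y // R p.1 p.2}), t.image (fun (a, p) => (a, p.1.1)) = u ∧ t.image (fun (a, p) => (a, p.1.2)) = v holds if and only if (∀ x a, (a, x) ∈ u → ∃ y, (a, y) ∈ v ∧ R x y) and (∀ y a, (a, y) ∈ v → ∃ x, (a, x) ∈ u ∧ R x y). -/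
theorem finset_relLift_iff {A X Y : Type*} [DecidableEq A] [DecidableEq X] [DecidableEq Y]
    (R : X → Y → Prop) (u : Finset (A × X)) (v : Finset (A × Y)) :
    (∃ t : Finset (A × {p : X × Y // R p.1 p.2}),
        t.image (fun q => (q.1, q.2.1.1)) = u ∧ t.image (fun q => (q.1, q.2.1.2)) = v) ↔
      ((∀ x a, (a, x) ∈ u → ∃ y, (a, y) ∈ v ∧ R x y) ∧
       (∀ y a, (a, y) ∈ v → ∃ x, (a, x) ∈ u ∧ R x y)) := by
  classical
  constructor
  · rintro ⟨t, rfl, rfl⟩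
    constructor
    · intro x a h
      simp only [Finset.mem_image] at h ⊢
      obtain ⟨q, hq, heq⟩ := h
      obtain ⟨ha, hx⟩ := Prod.ext_iff.mp heq
      simp only at ha hx
      exact ⟨q.2.1.2, ⟨q, hq, by rw [ha]⟩, hx ▸ q.2.2⟩
    · intro y a h
      simp only [Finset.mem_image] at h ⊢
      obtain ⟨q, hq, heq⟩ := h
      obtain ⟨ha, hy⟩ := Prod.ext_iff.mp heq
      simp only at ha hy
      exact ⟨q.2.1.1, ⟨q, hq, by rw [ha]⟩, hy ▸ q.2.2⟩
  · rintro ⟨h1, h2⟩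
    set s := ((u ×ˢ v).filter
      (fun q : (A × X) × (A × Y) => q.1.1 = q.2.1 ∧ R q.1.2 q.2.2)) with hs
    refine ⟨s.attach.image (fun q =>
      (q.1.1.1, ⟨(q.1.1.2, q.1.2.2), (Finset.mem_filter.mp q.2).2.2⟩)), ?_, ?_⟩
    · ext ⟨a, x⟩
      simp only [Finset.mem_image, Finset.mem_attach, true_and, Subtype.exists]
      constructor
      · rintro ⟨q, ⟨w, hw, rfl⟩, heq⟩
        obtain ⟨ha, hx⟩ := Prod.ext_iff.mp heq
        simp only at ha hx
        have hw' := Finset.mem_filter.mp hw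
        have hu := (Finset.mem_product.mp hw'.1).1
        rw [← ha, ← hx]
        simpa using hu
      · intro hu
        obtain ⟨y, hv, hr⟩ := h1 x a hu
        exact ⟨(a, ⟨(x, y), hr⟩), ⟨((a, x), (a, y)),
          Finset.mem_filter.mpr ⟨Finset.mem_product.mpr ⟨hu, hv⟩, rfl, hr⟩, rfl⟩, rfl⟩
    · ext ⟨a, y⟩
      simp only [Finset.mem_image, Finset.mem_attach, true_and, Subtype.exists]
      constructor
      · rintro ⟨q, ⟨w, hw, rfl⟩, heq⟩
        obtain ⟨ha, hy⟩ := Prod.ext_iff.mp heq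
        simp only at ha hy
        have hw' := Finset.mem_filter.mp hw
        have hv := (Finset.mem_product.mp hw'.1).2
        have heq2 := hw'.2.1
        rw [← ha, ← hy, heq2]
        simpa using hv
      · intro hv
        obtain ⟨x, hu, hr⟩ := h2 y a hv
        exact ⟨(a, ⟨(x, y), hr⟩), ⟨((a, x), (a, y)),
          Finset.mem_filter.mpr ⟨Finset.mem_product.mpr ⟨hu, hv⟩, rfl, hr⟩, rfl⟩, rfl⟩
end

section
/- For a finitely branching LTS f : X → Finset (A × X), define the Hennessy–Milner satisfaction relation on formulas generated by tt, ff, conjunction, disjunction, box ⟨a⟩ and diamond [a]: x ⊨ [a]φ iff ∀ x', (a,x') ∈ f x → x' ⊨ φ, and x ⊨ ⟨a⟩φ iff ∃ x', (a,x') ∈ f x ∧ x' ⊨ φ. Then bisimilar states satisfy the same formulas: if x ∼ y then ∀ φ, (x ⊨ φ ↔ y ⊨ φ). -/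
/-- The bisimulation operator for a finitely branching LTS. -/
def Phi {X A : Type*} (f : X → Finset (A × X)) (R : X → X → Prop) (x y : X) : Prop :=
  (∀ a x', (a, x') ∈ f x → ∃ y', (a, y') ∈ f y ∧ R x' y') ∧
  (∀ a y', (a, y') ∈ f y → ∃ x', (a, x') ∈ f x ∧ R x' y')

/-- Bisimilarity: the greatest fixed point of `Phi`. -/
def Bisimilar {X A : Type*} (f : X → Finset (A × X)) (x y : X) : Prop :=
  ∃ R : X → X → Prop, R ≤ Phi f R ∧ R x y

/-- Formulas of Hennessy–Milner logic. -/
inductive HML (A : Type*) where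
  | tt : HML A
  | ff : HML A
  | and : HML A → HML A → HML A
  | or : HML A → HML A → HML A
  | box : A → HML A → HML A
  | dia : A → HML A → HML A

/-- The satisfaction relation of Hennessy–Milner logic over an LTS `f`. -/
def Sat {X A : Type*} (f : X → Finset (A × X)) : X → HML A → Prop
  | _, .tt => True
  | _, .ff => False
  | x, .and φ ψ => Sat f x φ ∧ Sat f x ψ
  | x, .or φ ψ => Sat f x φ ∨ Sat f x ψ
  | x, .box a φ => ∀ x', (a, x') ∈ f x → Sat f x' φ
  | x, .dia a φ => ∃ x', (a, x') ∈ f x ∧ Sat f x' φ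

theorem hml_sound {X A : Type*} [DecidableEq A] (f : X → Finset (A × X))
    (x y : X) (h : Bisimilar f x y) : ∀ φ : HML A, Sat f x φ ↔ Sat f y φ := by
  intro φ
  induction φ generalizing x y with
  | tt => simp [Sat]
  | ff => simp [Sat]
  | and φ ψ ihφ ihψ => simp only [Sat]; rw [ihφ x y h, ihψ x y h]
  | or φ ψ ihφ ihψ => simp only [Sat]; rw [ihφ x y h, ihψ x y h]
  | box a φ ih =>
    obtain ⟨R, hR, hxy⟩ := h
    simp only [Sat]
    constructor
    · intro hx y' hy'
      obtain ⟨x', hx', hRx'⟩ := (hR _ _ hxy).2 a y' hy'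
      exact (ih x' y' ⟨R, hR, hRx'⟩).mp (hx x' hx')
    · intro hy x' hx'
      obtain ⟨y', hy', hRy'⟩ := (hR _ _ hxy).1 a x' hx'
      exact (ih x' y' ⟨R, hR, hRy'⟩).mpr (hy y' hy')
  | dia a φ ih =>
    obtain ⟨R, hR, hxy⟩ := h
    simp only [Sat]
    constructor
    · rintro ⟨x', hx', hs⟩
      obtain ⟨y', hy', hRy'⟩ := (hR _ _ hxy).1 a x' hx'
      exact ⟨y', hy', (ih x' y' ⟨R, hR, hRy'⟩).mp hs⟩
    · rintro ⟨y', hy', hs⟩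
      obtain ⟨x', hx', hRx'⟩ := (hR _ _ hxy).2 a y' hy'
      exact ⟨x', hx', (ih x' y' ⟨R, hR, hRx'⟩).mpr hs⟩
end

section
/- For finitely branching LTSs, Hennessy–Milner logic is complete: if two states x and y satisfy exactly the same HML formulas, then the relation 'satisfies the same formulas' is a bisimulation, and hence x and y are bisimilar. -/
/-- De Morgan dual (negation) of an HML formula. -/
def HML.neg {A : Type*} : HML A → HML A
  | .tt => .ff
  | .ff => .tt
  | .and φ ψ => .or φ.neg ψ.neg
  | .or φ ψ => .and φ.neg ψ.neg
  | .box a φ => .dia a φ.neg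
  | .dia a φ => .box a φ.neg

lemma sat_neg {X A : Type*} (f : X → Finset (A × X)) (φ : HML A) :
    ∀ x, Sat f x φ.neg ↔ ¬ Sat f x φ := by
  induction φ with
  | tt => intro x; simp [HML.neg, Sat]
  | ff => intro x; simp [HML.neg, Sat]
  | and φ ψ ihφ ihψ => intro x; simp [HML.neg, Sat, ihφ, ihψ]; tauto
  | or φ ψ ihφ ihψ => intro x; simp [HML.neg, Sat, ihφ, ihψ, not_or]
  | box a φ ih => intro x; simp [HML.neg, Sat, ih]
  | dia a φ ih => intro x; simp [HML.neg, Sat, ih]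

/-- Finite conjunction. -/
def bigAnd {A : Type*} (l : List (HML A)) : HML A := l.foldr .and .tt

lemma sat_bigAnd {X A : Type*} (f : X → Finset (A × X)) (x : X) (l : List (HML A)) :
    Sat f x (bigAnd l) ↔ ∀ φ ∈ l, Sat f x φ := by
  induction l with
  | nil => simp [bigAnd, Sat]
  | cons h t ih => simp [bigAnd, Sat, List.foldr] at ih ⊢; simp [ih]

lemma hml_key {X A : Type*} [DecidableEq A] (f : X → Finset (A × X))
    (x y : X) (h : ∀ φ : HML A, Sat f x φ ↔ Sat f y φ)
    (a : A) (x' : X) (hx' : (a, x') ∈ f x) :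
    ∃ y', (a, y') ∈ f y ∧ ∀ φ : HML A, Sat f x' φ ↔ Sat f y' φ := by
  by_contra hc
  push_neg at hc
  -- for every a-successor y' of y, pick a formula satisfied by x' but not y'
  have hdist : ∀ y' : X, (a, y') ∈ f y → ∃ φ, Sat f x' φ ∧ ¬ Sat f y' φ := by
    intro y' hy'
    obtain ⟨φ, hφ⟩ := hc y' hy'
    rcases hφ with ⟨h1, h2⟩ | ⟨h1, h2⟩
    · exact ⟨φ, h1, h2⟩
    · exact ⟨φ.neg, (sat_neg f φ x').mpr h1, fun hy => ((sat_neg f φ y').mp hy) h2⟩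
  classical
  choose g hg1 hg2 using hdist
  set l : List (HML A) :=
    ((f y).toList.filter (fun p => p.1 = a)).attach.map
      (fun p => g p.1.2 (by
        obtain ⟨⟨b, y''⟩, hp⟩ := p
        simp only [List.mem_filter, Finset.mem_toList, decide_eq_true_eq] at hp
        obtain ⟨hmem, rfl⟩ := hp
        exact hmem)) with hl
  have hsatx' : Sat f x' (bigAnd l) := by
    rw [sat_bigAnd]
    intro φ hφ
    simp only [hl, List.mem_map] at hφ
    obtain ⟨p, _, rfl⟩ := hφ
    apply hg1
  have hx : Sat f x (.dia a (bigAnd l)) := ⟨x', hx', hsatx'⟩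
  have hy : Sat f y (.dia a (bigAnd l)) := (h _).mp hx
  obtain ⟨y', hy', hsaty'⟩ := hy
  have hmem : g y' hy' ∈ l := by
    simp only [hl, List.mem_map]
    have hmem' : (a, y') ∈ (f y).toList.filter (fun p => p.1 = a) := by
      rw [List.mem_filter]
      exact ⟨Finset.mem_toList.mpr hy', by simp⟩
    exact ⟨⟨(a, y'), hmem'⟩, List.mem_attach _ _, rfl⟩
  exact hg2 y' hy' ((sat_bigAnd f y' l).mp hsaty' _ hmem)

theorem hml_complete {X A : Type*} [DecidableEq A] (f : X → Finset (A × X)) :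
    ((fun x y => ∀ φ : HML A, Sat f x φ ↔ Sat f y φ) ≤
      Phi f (fun x y => ∀ φ : HML A, Sat f x φ ↔ Sat f y φ)) ∧
    (∀ x y : X, (∀ φ : HML A, Sat f x φ ↔ Sat f y φ) → Bisimilar f x y) := by
  constructor
  · intro x y h
    refine ⟨fun a x' hx' => hml_key f x y h a x' hx', fun a y' hy' => ?_⟩
    obtain ⟨x', hx', hiff⟩ := hml_key f y x (fun φ => (h φ).symm) a y' hy'
    exact ⟨x', hx', fun φ => (hiff φ).symm⟩
  · intro x y h
    refine ⟨fun x y => ∀ φ : HML A, Sat f x φ ↔ Sat f y φ, ?_, h⟩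
    intro x y h
    refine ⟨fun a x' hx' => hml_key f x y h a x' hx', fun a y' hy' => ?_⟩
    obtain ⟨x', hx', hiff⟩ := hml_key f y x (fun φ => (h φ).symm) a y' hy'
    exact ⟨x', hx', fun φ => (hiff φ).symm⟩
end
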